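/- arXiv:1807.11360 — 4 statements merged into one kernel-verified Lean document; each statement's English description precedes it below -/
import Mathlib

section
/- Let p be a prime, e, m, n positive integers, q = p^e, and 1 ≤ m ≤ n ≤ q−1. If the monomial digraph D(q; m, n) is strong, then diam(D(q; m, n)) ≥ 3. -/
/-!
A walk leaving a vertex `(0, b)` must go to the line `y₂ = -b`, and a walk entering `(0, c)` must
come from the line `y₂ = -c`, because `0 ^ m = 0 ^ n = 0` for `m, n ≥ 1`. Hence for `b ≠ c` and `b + c ≠ 0`
there is no walk of length `0`, `1` or `2` from `(0, b)` to `(0, c)`; take `b = 0`, `c = 1`.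
-/

/-- `walkLen r k x y` means there is a directed walk of length exactly `k`
from `x` to `y` in the digraph with arc relation `r`. -/
def walkLen {V : Type*} (r : V → V → Prop) : ℕ → V → V → Prop
  | 0 => fun x y => x = y
  | k + 1 => fun x y => ∃ z, r x z ∧ walkLen r k z y

/-- The distance from `x` to `y`: the minimum length of a directed walk,
`⊤` if `y` is not reachable from `x`. -/
noncomputable def ddist {V : Type*} (r : V → V → Prop) (x y : V) : ℕ∞ :=
  ⨅ n ∈ {n : ℕ | walkLen r n x y}, (n : ℕ∞)

/-- The diameter of the digraph: the maximum of distances over all ordered pairs. -/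
noncomputable def ddiam {V : Type*} (r : V → V → Prop) : ℕ∞ :=
  ⨆ x, ⨆ y, ddist r x y

/-- A digraph is strong if every vertex is reachable from every vertex. -/
def IsStrongDigraph {V : Type*} (r : V → V → Prop) : Prop :=
  ∀ x y : V, ∃ n : ℕ, walkLen r n x y

/-- The arc relation of the monomial digraph `D(q; m, n)`:
`(x₁, x₂) → (y₁, y₂)` iff `x₂ + y₂ = x₁ ^ m * y₁ ^ n`. -/
def monomialArc {F : Type*} [Field F] (m n : ℕ) (x y : F × F) : Prop :=
  x.2 + y.2 = x.1 ^ m * y.1 ^ n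

section Digraph

variable {V : Type*} (r : V → V → Prop)

theorem walkLen_one_iff {x y : V} : walkLen r 1 x y ↔ r x y := by
  simp [walkLen]

theorem walkLen_two_iff {x y : V} : walkLen r 2 x y ↔ ∃ z, r x z ∧ r z y := by
  simp [walkLen]

variable {r}

theorem le_ddist_of_forall_lt_not_walkLen {x y : V} {d : ℕ}
    (h : ∀ k < d, ¬ walkLen r k x y) : (d : ℕ∞) ≤ ddist r x y :=
  le_iInf₂ fun k hk => by
    by_contra! hlt
    exact h k (by exact_mod_cast hlt) hk

theorem ddist_le_ddiam (x y : V) : ddist r x y ≤ ddiam r :=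
  le_iSup₂ (f := fun x y => ddist r x y) x y

end Digraph

section Monomial

variable {F : Type*} [Field F] {m n : ℕ}

theorem monomialArc_zero_left_iff (hm : m ≠ 0) {b : F} {y : F × F} :
    monomialArc m n (0, b) y ↔ b + y.2 = 0 := by
  simp [monomialArc, zero_pow hm]

theorem monomialArc_zero_right_iff (hn : n ≠ 0) {x : F × F} {c : F} :
    monomialArc m n x (0, c) ↔ x.2 + c = 0 := by
  simp [monomialArc, zero_pow hn]

theorem three_le_ddist_monomialArc_zero (hm : m ≠ 0) (hn : n ≠ 0) {b c : F}
    (hbc : b ≠ c) (hbc' : b + c ≠ 0) :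
    3 ≤ ddist (monomialArc m n) ((0, b) : F × F) (0, c) := by
  refine le_ddist_of_forall_lt_not_walkLen fun k hk hwalk => ?_
  interval_cases k
  · exact hbc (congrArg Prod.snd hwalk)
  · exact hbc' ((monomialArc_zero_left_iff hm).1 ((walkLen_one_iff _).1 hwalk))
  · obtain ⟨z, hbz, hzc⟩ := (walkLen_two_iff _).1 hwalk
    rw [monomialArc_zero_left_iff hm] at hbz
    rw [monomialArc_zero_right_iff hn] at hzc
    exact hbc (by linear_combination hbz - hzc)

end Monomial

theorem diam_ge_three_general {m n : ℕ}
    (F : Type*) [Field F]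
    (hm : 1 ≤ m) (hmn : m ≤ n) :
    3 ≤ ddiam (monomialArc (F := F) m n) :=
  calc (3 : ℕ∞) ≤ ddist (monomialArc m n) ((0, 0) : F × F) (0, 1) :=
        three_le_ddist_monomialArc_zero (by omega) (by omega) zero_ne_one (by simp)
    _ ≤ ddiam (monomialArc m n) := ddist_le_ddiam _ _

theorem diam_ge_three {p e m n : ℕ} (hp : p.Prime) (he : 0 < e)
    (F : Type*) [Field F] [Fintype F] (hF : Fintype.card F = p ^ e)
    (hm : 1 ≤ m) (hmn : m ≤ n) (hn : n ≤ p ^ e - 1)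
    (hstrong : IsStrongDigraph (monomialArc (F := F) m n)) :
    3 ≤ ddiam (monomialArc (F := F) m n) :=
  diam_ge_three_general F hm hmn
end

section
/- Let p be a prime, m, n positive integers, q = p^2, and 1 ≤ m ≤ n ≤ q−1. If the monomial digraph D(q; m, n) is strong, then diam(D(q; m, n)) ≤ 96√(n+1) + 1. -/
/-!
A monomial value `s = a ^ m * b ^ n` can be added to the second coordinate by the walk
`(0, w) → (a, -w) → (b, w + s) → (0, -(w + s))` traversed twice (the second time with `s = 0`),
and every vertex is one arc away from, and one arc before, the line `x₁ = 0`. So the diameter is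
at most `6 k + 2` once every element of `F` is a sum of `k` monomial values.

If all monomial values lay in the prime field `𝔽_p`, the second coordinate could never leave `𝔽_p`;
so strongness gives a monomial value `h₀ ∉ 𝔽_p`, and `F = 𝔽_p + 𝔽_p h₀`. Since monomial values are
closed under multiplication, it suffices to cover `𝔽_p` by sums of elements of the set `W` of
residues that are sums of two monomial values. `W` contains the trace `z + z ^ p` and the norm
`z ^ (p + 1)` of every monomial value `z`, and these two determine `z` up to two choices, so
`p ^ 2 ≤ n · #{monomial values} ≤ 2 n |W| ^ 2`. By Cauchy–Davenport, `j` summands from `W` cover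
`𝔽_p` once `j (|W| - 1) ≥ p - 1`, which happens for some `j ≤ 1 + √(8 n)`.
-/

open Finset Pointwise

namespace walkLen

variable {V : Type*} {r : V → V → Prop}

lemma append {k l : ℕ} {x y z : V} (hxy : walkLen r k x y) (hyz : walkLen r l y z) :
    walkLen r (k + l) x z := by
  induction k generalizing x with
  | zero => cases hxy; simpa using hyz
  | succ k ih =>
    obtain ⟨w, hxw, hwy⟩ := hxy
    rw [Nat.add_right_comm]
    exact ⟨w, hxw, ih hwy⟩

lemma single {x y : V} (h : r x y) : walkLen r 1 x y := ⟨y, h, rfl⟩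

lemma mem_of_mem {s : Set V} (hs : ∀ x y, r x y → x ∈ s → y ∈ s) {k : ℕ} {x y : V}
    (hxy : walkLen r k x y) (hx : x ∈ s) : y ∈ s := by
  induction k generalizing x with
  | zero => cases hxy; exact hx
  | succ k ih =>
    obtain ⟨z, hxz, hzy⟩ := hxy
    exact ih hzy (hs x z hxz hx)

end walkLen

lemma ddiam_le_of_forall_walkLen {V : Type*} {r : V → V → Prop} {K : ℕ}
    (h : ∀ x y : V, ∃ k ≤ K, walkLen r k x y) : ddiam r ≤ K :=
  iSup₂_le fun x y =>
    let ⟨k, hk, hxy⟩ := h x y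
    (iInf₂_le k hxy).trans (by exact_mod_cast hk)

/-- Exactly the sums `x₂ + y₂` over arcs `x → y` of `D(q; m, n)`. -/
def monomialValues (M : Type*) [CommMonoid M] (m n : ℕ) : Submonoid M where
  carrier := {z | ∃ a b : M, a ^ m * b ^ n = z}
  mul_mem' := by
    rintro _ _ ⟨a, b, rfl⟩ ⟨c, d, rfl⟩
    exact ⟨a * c, b * d, by simp only [mul_pow]; exact mul_mul_mul_comm _ _ _ _⟩
  one_mem' := ⟨1, 1, by simp⟩

lemma zero_mem_monomialValues {M : Type*} [CommMonoidWithZero M] {m n : ℕ} (hm : m ≠ 0) :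
    (0 : M) ∈ monomialValues M m n :=
  ⟨0, 0, by simp [hm]⟩

lemma Submonoid.mul_mem_nsmul_coe {R : Type*} [Semiring R] (S : Submonoid R) {u γ : R}
    (hu : u ∈ S) {k : ℕ} (hγ : γ ∈ k • (S : Set R)) : u * γ ∈ k • (S : Set R) := by
  have hmap : (AddMonoidHom.mulLeft u) '' (S : Set R) ⊆ S := by
    rintro _ ⟨s, hs, rfl⟩
    exact S.mul_mem hu hs
  have h := Set.mem_image_of_mem (AddMonoidHom.mulLeft u) hγ
  rw [Set.image_nsmul] at h
  exact Set.nsmul_subset_nsmul_left hmap h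

section MonomialWalks

variable {F : Type*} [Field F] {m n : ℕ}

lemma walkLen_three_zero_neg_add (hm : m ≠ 0) (hn : n ≠ 0) (w : F) {s : F}
    (hs : s ∈ monomialValues F m n) :
    walkLen (monomialArc m n) 3 ((0 : F), w) ((0 : F), -(w + s)) := by
  obtain ⟨a, b, rfl⟩ := hs
  refine ⟨(a, -w), ?_, (b, a ^ m * b ^ n + w), ?_, (0, -(w + a ^ m * b ^ n)), ?_, rfl⟩ <;>
    simp only [monomialArc, zero_pow hm, zero_pow hn] <;> ring

lemma walkLen_six_zero_add (hm : m ≠ 0) (hn : n ≠ 0) (w : F) {s : F}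
    (hs : s ∈ monomialValues F m n) :
    walkLen (monomialArc m n) 6 ((0 : F), w) ((0 : F), w + s) := by
  have h := (walkLen_three_zero_neg_add hm hn w hs).append
    (walkLen_three_zero_neg_add hm hn _ (zero_mem_monomialValues hm))
  rwa [add_zero, neg_neg] at h

lemma walkLen_zero_add_of_mem_nsmul (hm : m ≠ 0) (hn : n ≠ 0) {k : ℕ} {γ : F}
    (hγ : γ ∈ k • (monomialValues F m n : Set F)) (w : F) :
    walkLen (monomialArc m n) (6 * k) ((0 : F), w) ((0 : F), w + γ) := by
  induction k generalizing γ w with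
  | zero =>
    rw [zero_nsmul, Set.mem_zero] at hγ
    rw [hγ, add_zero]
    rfl
  | succ k ih =>
    rw [succ_nsmul, Set.mem_add] at hγ
    obtain ⟨δ, hδ, s, hs, rfl⟩ := hγ
    have h := (ih hδ w).append (walkLen_six_zero_add hm hn (w + δ) hs)
    rwa [← add_assoc]

lemma walkLen_of_sub_mem_nsmul (hm : m ≠ 0) (hn : n ≠ 0) {k : ℕ} {x y : F × F}
    (hxy : x.2 - y.2 ∈ k • (monomialValues F m n : Set F)) :
    walkLen (monomialArc m n) (6 * k + 2) x y := by
  have hx : monomialArc m n x ((0 : F), -x.2) := by simp [monomialArc, hn]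
  have hy : monomialArc m n ((0 : F), -y.2) y := by simp [monomialArc, hm]
  have h := walkLen_zero_add_of_mem_nsmul hm hn hxy (-x.2)
  rw [show -x.2 + (x.2 - y.2) = -y.2 by ring] at h
  exact ⟨_, hx, h.append (walkLen.single hy)⟩

end MonomialWalks

lemma exists_mem_monomialValues_not_mem {F : Type*} [Field F] {m n : ℕ} {K : Subfield F}
    (hK : K ≠ ⊤) (hstrong : IsStrongDigraph (monomialArc (F := F) m n)) :
    ∃ s ∈ monomialValues F m n, s ∉ K := by
  by_contra! hS
  obtain ⟨α, hα⟩ := SetLike.exists_not_mem_of_ne_top K hK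
  obtain ⟨k, hk⟩ := hstrong (0, 0) (0, α)
  refine hα (hk.mem_of_mem (s := {x : F × F | x.2 ∈ K}) (fun x y hxy hx => ?_) K.zero_mem)
  show y.2 ∈ K
  rw [eq_sub_of_add_eq' hxy]
  exact K.sub_mem (hS _ ⟨x.1, y.1, rfl⟩) hx

lemma eq_or_eq_pow_of_add_pow_eq {R : Type*} [CommRing R] [NoZeroDivisors R] {q : ℕ} {z w : R}
    (htr : w + w ^ q = z + z ^ q) (hnorm : w ^ (q + 1) = z ^ (q + 1)) : w = z ∨ w = z ^ q := by
  have h : (w - z) * (w - z ^ q) = 0 := by linear_combination w * htr - hnorm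
  simpa [sub_eq_zero] using h

lemma card_le_two_mul_card_image_add_pow {R : Type*} [CommRing R] [NoZeroDivisors R]
    [DecidableEq R] (s : Finset R) (q : ℕ) :
    #s ≤ 2 * #(s.image fun z => (z + z ^ q, z ^ (q + 1))) := by
  refine card_le_mul_card_image s 2 fun c hc => ?_
  obtain ⟨z, -, rfl⟩ := mem_image.1 hc
  refine (card_le_card fun w hw => ?_).trans (card_le_two (a := z) (b := z ^ q))
  obtain ⟨-, hwz⟩ := mem_filter.1 hw
  simp only [Prod.mk.injEq] at hwz
  simpa using eq_or_eq_pow_of_add_pow_eq hwz.1 hwz.2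

lemma card_le_mul_card_image_pow {R : Type*} [CommRing R] [IsDomain R] [Fintype R]
    [DecidableEq R] {n : ℕ} (hn : n ≠ 0) :
    Fintype.card R ≤ n * #(univ.image fun x : R => x ^ n) := by
  refine card_le_mul_card_image univ n fun y _ => ?_
  refine (card_le_card fun x hx => ?_).trans
    ((Multiset.toFinset_card_le _).trans (Polynomial.card_nthRoots n y))
  rw [Multiset.mem_toFinset, Polynomial.mem_nthRoots (Nat.pos_of_ne_zero hn)]
  exact (mem_filter.1 hx).2

lemma exists_add_mul_eq_of_not_mem {F : Type*} [Field F] [Finite F] {K : Subfield F}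
    (hK : Nat.card F = Nat.card K ^ 2) {h : F} (hh : h ∉ K) (γ : F) :
    ∃ a ∈ K, ∃ b ∈ K, a + b * h = γ := by
  let f : K × K → F := fun ab => ab.1 + ab.2 * h
  have hf : Function.Injective f := by
    rintro ⟨a, b⟩ ⟨a', b'⟩ hab
    have hbb : (b : F) = b' := by
      by_contra hne
      refine hh ?_
      rw [show h = (a' - a) / (b - b') by
        rw [eq_div_iff (sub_ne_zero.2 hne)]; linear_combination hab]
      exact K.div_mem (K.sub_mem a'.2 a.2) (K.sub_mem b.2 b'.2)
    have haa : (a : F) = a' := by simpa [f, hbb] using hab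
    simp [Subtype.ext haa, Subtype.ext hbb]
  obtain ⟨⟨a, b⟩, hab⟩ := (hf.bijective_of_nat_card_le (by rw [Nat.card_prod, hK, sq])).2 γ
  exact ⟨a, a.2, b, b.2, hab⟩

lemma ZMod.min_le_card_nsmul {p : ℕ} (hp : p.Prime) {W : Finset (ZMod p)} (hW : 0 ∈ W) (j : ℕ) :
    min p (j * (#W - 1) + 1) ≤ #(j • W) := by
  induction j with
  | zero => simp
  | succ j ih =>
    have hjW : (j • W).Nonempty := card_pos.1 (by have := hp.two_le; omega)
    have hcd := ZMod.cauchy_davenport hp hjW ⟨0, hW⟩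
    rw [succ_nsmul]
    have : (j + 1) * (#W - 1) = j * (#W - 1) + (#W - 1) := by ring
    have := card_pos.2 ⟨0, hW⟩
    omega

lemma ZMod.mem_nsmul_of_le {p : ℕ} (hp : p.Prime) {W : Finset (ZMod p)} (hW : 0 ∈ W) {j : ℕ}
    (hj : p ≤ j * (#W - 1) + 1) (a : ZMod p) : a ∈ j • W := by
  have : NeZero p := ⟨hp.ne_zero⟩
  have h := ZMod.min_le_card_nsmul hp hW j
  rw [eq_univ_of_card (j • W) (le_antisymm (card_le_univ _) (by rw [ZMod.card]; omega))]
  exact mem_univ a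

lemma exists_castHom_eq_of_mem_bot {F : Type*} [Field F] (p : ℕ) [Fact p.Prime] [CharP F p] {x : F}
    (hx : x ∈ (⊥ : Subfield F)) : ∃ k : ZMod p, ZMod.castHom dvd_rfl F k = x := by
  rwa [← ZMod.fieldRange_castHom_eq_bot p, RingHom.mem_fieldRange] at hx

section PrimeField

variable {F : Type*} [Field F] [Fintype F] {p : ℕ} [Fact p.Prime] [CharP F p]

lemma Subfield.bot_ne_top_of_card_eq_sq (hF : Fintype.card F = p ^ 2) : (⊥ : Subfield F) ≠ ⊤ := by
  intro h
  have hcard := Subfield.card_bot F p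
  rw [Nat.card_congr (Equiv.subtypeUnivEquiv fun x => h ▸ Subfield.mem_top x),
    Nat.card_eq_fintype_card, hF] at hcard
  have := (Fact.out : p.Prime).two_le
  nlinarith

lemma add_pow_char_mem_bot (hF : Fintype.card F = p ^ 2) (z : F) :
    z + z ^ p ∈ (⊥ : Subfield F) := by
  rw [Subfield.mem_bot_iff_pow_eq_self F p, add_pow_char, ← pow_mul, ← sq, ← hF,
    FiniteField.pow_card, add_comm]

lemma pow_char_add_one_mem_bot (hF : Fintype.card F = p ^ 2) (z : F) :
    z ^ (p + 1) ∈ (⊥ : Subfield F) := by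
  rw [Subfield.mem_bot_iff_pow_eq_self F p, ← pow_mul, add_one_mul, pow_add, ← sq, ← hF,
    FiniteField.pow_card, pow_succ', mul_comm]

end PrimeField

section Residues

variable (F : Type*) [Field F] (p m n : ℕ) [Fact p.Prime] [CharP F p]

open scoped Classical in
noncomputable def twoSumResidues : Finset (ZMod p) :=
  univ.filter fun k => ZMod.castHom dvd_rfl F k ∈ 2 • (monomialValues F m n : Set F)

variable {F p m n}

lemma castHom_mem_twoSumResidues_iff {k : ZMod p} :
    k ∈ twoSumResidues F p m n ↔
      ZMod.castHom dvd_rfl F k ∈ 2 • (monomialValues F m n : Set F) := by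
  simp only [twoSumResidues, mem_filter, mem_univ, true_and]

lemma add_mem_two_nsmul {s t : F} (hs : s ∈ monomialValues F m n)
    (ht : t ∈ monomialValues F m n) : s + t ∈ 2 • (monomialValues F m n : Set F) := by
  rw [two_nsmul]
  exact Set.add_mem_add hs ht

lemma zero_mem_twoSumResidues (hm : m ≠ 0) : 0 ∈ twoSumResidues F p m n := by
  rw [castHom_mem_twoSumResidues_iff, map_zero, ← add_zero 0]
  exact add_mem_two_nsmul (zero_mem_monomialValues hm) (zero_mem_monomialValues hm)

lemma one_mem_twoSumResidues (hm : m ≠ 0) : 1 ∈ twoSumResidues F p m n := by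
  rw [castHom_mem_twoSumResidues_iff, map_one, ← add_zero 1]
  exact add_mem_two_nsmul (monomialValues F m n).one_mem (zero_mem_monomialValues hm)

lemma two_le_card_twoSumResidues (hm : m ≠ 0) : 2 ≤ #(twoSumResidues F p m n) := by
  refine (card_pair zero_ne_one).symm.le.trans (card_le_card ?_)
  rw [insert_subset_iff, singleton_subset_iff]
  exact ⟨zero_mem_twoSumResidues hm, one_mem_twoSumResidues hm⟩

lemma mem_image_twoSumResidues [DecidableEq F] {x : F} (hx : x ∈ (⊥ : Subfield F))
    (h2 : x ∈ 2 • (monomialValues F m n : Set F)) :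
    x ∈ (twoSumResidues F p m n).image (ZMod.castHom dvd_rfl F) := by
  obtain ⟨k, rfl⟩ := exists_castHom_eq_of_mem_bot p hx
  exact mem_image_of_mem _ (castHom_mem_twoSumResidues_iff.2 h2)

variable [Fintype F]

lemma sq_card_le_two_mul_card_twoSumResidues (hF : Fintype.card F = p ^ 2) (hm : m ≠ 0)
    (hn : n ≠ 0) : p ^ 2 ≤ 2 * n * #(twoSumResidues F p m n) ^ 2 := by
  classical
  set S := univ.filter (· ∈ monomialValues F m n)
  set R := (twoSumResidues F p m n).image (ZMod.castHom dvd_rfl F)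
  have hpowers : univ.image (fun x : F => x ^ n) ⊆ S := fun y hy => by
    obtain ⟨x, -, rfl⟩ := mem_image.1 hy
    exact mem_filter.2 ⟨mem_univ _, 1, x, by simp⟩
  have htrace : S.image (fun z => (z + z ^ p, z ^ (p + 1))) ⊆ R ×ˢ R := fun c hc => by
    obtain ⟨z, hz, rfl⟩ := mem_image.1 hc
    have hz : z ∈ monomialValues F m n := (mem_filter.1 hz).2
    refine mem_product.2 ⟨mem_image_twoSumResidues (add_pow_char_mem_bot hF z)
      (add_mem_two_nsmul hz (pow_mem hz p)), mem_image_twoSumResidues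
      (pow_char_add_one_mem_bot hF z) ?_⟩
    simpa using add_mem_two_nsmul (pow_mem hz (p + 1)) (zero_mem_monomialValues hm)
  calc p ^ 2 ≤ n * #(univ.image fun x : F => x ^ n) := hF ▸ card_le_mul_card_image_pow hn
    _ ≤ n * #S := Nat.mul_le_mul_left n (card_le_card hpowers)
    _ ≤ n * (2 * #(R ×ˢ R)) := Nat.mul_le_mul_left n
        ((card_le_two_mul_card_image_add_pow S p).trans
          (Nat.mul_le_mul_left 2 (card_le_card htrace)))
    _ ≤ 2 * n * #(twoSumResidues F p m n) ^ 2 := by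
        rw [card_product, sq, mul_left_comm, mul_assoc]
        gcongr <;> exact card_image_le

lemma mem_nsmul_monomialValues (hF : Fintype.card F = p ^ 2) {h₀ : F}
    (hh₀S : h₀ ∈ monomialValues F m n) (hh₀ : h₀ ∉ (⊥ : Subfield F)) {j : ℕ}
    (hj : ∀ k, k ∈ j • twoSumResidues F p m n) (γ : F) :
    γ ∈ (4 * j) • (monomialValues F m n : Set F) := by
  have hbot : ∀ x ∈ (⊥ : Subfield F), x ∈ (2 * j) • (monomialValues F m n : Set F) := by
    intro x hx
    obtain ⟨k, rfl⟩ := exists_castHom_eq_of_mem_bot p hx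
    have h := Set.mem_image_of_mem (ZMod.castHom dvd_rfl F) (mem_coe.2 (hj k))
    rw [coe_nsmul, Set.image_nsmul] at h
    rw [mul_nsmul]
    refine Set.nsmul_subset_nsmul_left ?_ h
    rintro _ ⟨k, hk, rfl⟩
    exact castHom_mem_twoSumResidues_iff.1 hk
  have hcard : Nat.card F = Nat.card (⊥ : Subfield F) ^ 2 := by
    rw [Subfield.card_bot F p, Nat.card_eq_fintype_card, hF]
  obtain ⟨a, ha, b, hb, rfl⟩ := exists_add_mul_eq_of_not_mem hcard hh₀ γ
  rw [show 4 * j = 2 * j + 2 * j by ring, add_nsmul]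
  exact Set.add_mem_add (hbot a ha) (mul_comm h₀ b ▸ Submonoid.mul_mem_nsmul_coe _ hh₀S (hbot b hb))

end Residues

lemma sq_le_of_mul_sub_one_le {p n w t : ℕ} (hw : 2 ≤ w) (hpw : p ^ 2 ≤ 2 * n * w ^ 2)
    (ht : t * (w - 1) ≤ p - 1) : t ^ 2 ≤ 8 * n := by
  obtain ⟨v, rfl⟩ : ∃ v, w = v + 2 := ⟨w - 2, by omega⟩
  have htw : t * (v + 2) ≤ 2 * p := by
    rw [show v + 2 - 1 = v + 1 by omega] at ht
    have : t * (v + 2) ≤ 2 * (t * (v + 1)) := by nlinarith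
    omega
  have h : t ^ 2 * (v + 2) ^ 2 ≤ 8 * n * (v + 2) ^ 2 := by
    rw [← mul_pow]
    nlinarith [Nat.pow_le_pow_left htw 2]
  exact Nat.le_of_mul_le_mul_right h (by positivity)

lemma le_floor_of_sq_le {t n : ℕ} (h : t ^ 2 ≤ 8 * n) :
    6 * (4 * (t + 1)) + 2 ≤ ⌊96 * Real.sqrt (n + 1) + 1⌋₊ := by
  have hs := Real.sq_sqrt (by positivity : (0 : ℝ) ≤ n + 1)
  have hs1 : 1 ≤ Real.sqrt (n + 1) := Real.one_le_sqrt.2 (by simp)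
  have ht : (t : ℝ) ^ 2 ≤ 8 * n := by exact_mod_cast h
  apply Nat.le_floor
  push_cast
  -- `t ≤ √8 · √(n + 1)` and `√8 < 17 / 6`
  nlinarith [sq_nonneg (6 * (t : ℝ) - 17 * Real.sqrt (n + 1))]

theorem diam_le_of_strong_e_two_general {p m n : ℕ} (hp : p.Prime)
    (F : Type*) [Field F] [Fintype F] (hF : Fintype.card F = p ^ 2)
    (hm : 1 ≤ m) (hmn : m ≤ n)
    (hstrong : IsStrongDigraph (monomialArc (F := F) m n)) :
    ddiam (monomialArc (F := F) m n) ≤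
      (⌊96 * Real.sqrt (n + 1) + 1⌋₊ : ℕ∞) := by
  have : Fact p.Prime := ⟨hp⟩
  have : CharP F p := charP_of_card_eq_prime_pow hF
  have hm0 : m ≠ 0 := by omega
  have hn0 : n ≠ 0 := by omega
  obtain ⟨h₀, hh₀S, hh₀⟩ :=
    exists_mem_monomialValues_not_mem (Subfield.bot_ne_top_of_card_eq_sq hF) hstrong
  set W := twoSumResidues F p m n
  have hW : 2 ≤ #W := two_le_card_twoSumResidues hm0
  obtain ⟨t, ht, hcover⟩ : ∃ t, t * (#W - 1) ≤ p - 1 ∧ p ≤ (t + 1) * (#W - 1) + 1 := by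
    refine ⟨(p - 1) / (#W - 1), Nat.div_mul_le_self _ _, ?_⟩
    have := Nat.lt_div_mul_add (a := p - 1) (b := #W - 1) (by omega)
    rw [add_one_mul]
    omega
  refine ddiam_le_of_forall_walkLen fun x y => ⟨_, le_floor_of_sq_le
    (sq_le_of_mul_sub_one_le hW (sq_card_le_two_mul_card_twoSumResidues hF hm0 hn0) ht), ?_⟩
  exact walkLen_of_sub_mem_nsmul hm0 hn0 (mem_nsmul_monomialValues hF hh₀S hh₀
    (ZMod.mem_nsmul_of_le hp (zero_mem_twoSumResidues hm0) hcover) _)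

theorem diam_le_of_strong_e_two {p m n : ℕ} (hp : p.Prime)
    (F : Type*) [Field F] [Fintype F] (hF : Fintype.card F = p ^ 2)
    (hm : 1 ≤ m) (hmn : m ≤ n) (hn : n ≤ p ^ 2 - 1)
    (hstrong : IsStrongDigraph (monomialArc (F := F) m n)) :
    ddiam (monomialArc (F := F) m n) ≤
      (⌊96 * Real.sqrt (n + 1) + 1⌋₊ : ℕ∞) :=
  diam_le_of_strong_e_two_general hp F hF hm hmn hstrong
end

section
/- Let q = p^e be a prime power, n a positive integer with 1 ≤ n ≤ q−1, and suppose p does not divide n and q > (n² − n + 1)². Then for all a, c ∈ F_q with a ≠ 0 and c ≠ 0, the equation a·x^n − x·y^n + c = 0 has a solution (x, y) ∈ F_q². -/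
/-!
If `x * y ^ n = a * x ^ n + c` had no solution, then `(a * x ^ n + c) / x` would never be an
`n`-th power, so summing the characters `ψ` of `𝔽_q` with `ψ ^ n = 1` at it and then over `x`
would give `0`. The trivial character contributes `q - 1`. Each of the at most `n - 1` others
contributes `∑ₓ ψ⁻¹ (a * x ^ n + c) * ψ x`, which splits along `x ↦ x ^ n` into at most `n`
twisted Jacobi sums, each of absolute value at most `√q`. So `q - 1 ≤ (n - 1) * n * √q`, which
contradicts `√q > n ^ 2 - n + 1`.
-/

open Finset

noncomputable instance MulChar.fintypeOfFinite {M R : Type*} [CommMonoid M] [Finite Mˣ]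
    [CommRing R] [IsDomain R] : Fintype (MulChar M R) :=
  .ofFinite _

lemma IsCyclic.card_pow_eq_le {G : Type*} [CommGroup G] [Fintype G] [DecidableEq G] [IsCyclic G]
    {n : ℕ} (hn : 0 < n) (g : G) : #{x : G | x ^ n = g} ≤ n := by
  obtain hempty | ⟨x₀, hx₀⟩ := eq_empty_or_nonempty {x : G | x ^ n = g}
  · simp [hempty]
  refine le_trans (card_le_card_of_injOn (· * x₀⁻¹) (fun x hx ↦ ?_) ?_)
    (IsCyclic.card_pow_eq_one_le hn)
  · simp_all [mul_pow]
  · exact fun x _ y _ h ↦ mul_right_cancel h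

namespace MulChar

variable {F : Type*} [Field F] [Fintype F]

instance isCyclic : IsCyclic (MulChar F ℂ) :=
  (mulEquiv_units F ℂ).some.isCyclic.mpr inferInstance

lemma norm_apply_eq_one (χ : MulChar F ℂ) {x : F} (hx : x ≠ 0) : ‖χ x‖ = 1 :=
  Complex.norm_eq_one_of_pow_eq_one
    (by rw [← map_pow, FiniteField.pow_card_sub_one_eq_one x hx, map_one])
    (by have := Fintype.one_lt_card (α := F); omega)

lemma norm_jacobiSum_le (φ : MulChar F ℂ) {χ : MulChar F ℂ} (hχ : χ ≠ 1) :
    ‖jacobiSum φ χ‖ ≤ √(Fintype.card F) := by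
  have one_le : 1 ≤ √(Fintype.card F) :=
    Real.one_le_sqrt.mpr (by exact_mod_cast Fintype.card_pos)
  by_cases hφ : φ = 1
  · rwa [hφ, jacobiSum_one_nontrivial hχ, norm_neg, norm_one]
  by_cases hφχ : φ * χ = 1
  · rwa [eq_inv_of_mul_eq_one_right hφχ, jacobiSum_nontrivial_inv hφ, norm_neg,
      norm_apply_eq_one _ (neg_ne_zero.mpr one_ne_zero)]
  have hconj : starRingEnd ℂ (jacobiSum φ χ) = jacobiSum φ⁻¹ χ⁻¹ := by
    simp only [jacobiSum, map_sum, map_mul, starRingEnd_apply, star_apply']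
  have hchar : ringChar ℂ ≠ ringChar F := by
    simpa only [ringChar.eq_zero] using (CharP.ringChar_ne_zero_of_finite F).symm
  have hnormSq : Complex.normSq (jacobiSum φ χ) = Fintype.card F := by
    exact_mod_cast (Complex.mul_conj _).symm.trans <|
      hconj ▸ jacobiSum_mul_jacobiSum_inv hchar hφ hχ hφχ
  rw [Complex.norm_def, hnormSq]

/-- The substitution `u = -(c / a) * v` turns the sum into a multiple of `jacobiSum φ χ`. -/
lemma norm_sum_apply_affine_mul_le {a c : F} (ha : a ≠ 0) (hc : c ≠ 0) {χ : MulChar F ℂ}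
    (hχ : χ ≠ 1) (φ : MulChar F ℂ) :
    ‖∑ u, χ (a * u + c) * φ u‖ ≤ √(Fintype.card F) := by
  have ht : -(c / a) ≠ 0 := neg_ne_zero.mpr (div_ne_zero hc ha)
  have hsum : ∑ u, χ (a * u + c) * φ u = χ c * φ (-(c / a)) * jacobiSum φ χ := by
    rw [jacobiSum, mul_sum]
    refine (Fintype.sum_bijective _ (mulLeft_bijective₀ _ ht) _ _ fun v ↦ ?_).symm
    have : a * (-(c / a) * v) + c = c * (1 - v) := by field_simp; ring
    simp only [this, map_mul]
    ring
  rw [hsum, norm_mul, norm_mul, norm_apply_eq_one _ hc, norm_apply_eq_one _ ht, one_mul, one_mul]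
  exact norm_jacobiSum_le φ hχ

variable [DecidableEq F]

lemma sum_apply_eq_ite (χ : MulChar F ℂ) :
    ∑ x, χ x = if χ = 1 then (Fintype.card Fˣ : ℂ) else 0 := by
  split_ifs with hχ
  · rw [hχ, sum_one_eq_card_units]
  · exact sum_eq_zero_of_ne_one hχ

lemma sum_mulChar_apply_eq_ite (v : F) :
    ∑ χ : MulChar F ℂ, χ v = if v = 1 then (Fintype.card Fˣ : ℂ) else 0 := by
  split_ifs with hv
  · simp only [hv, map_one, sum_const, card_univ, nsmul_eq_mul, mul_one, ← Nat.card_eq_fintype_card,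
      card_eq_card_units_of_hasEnoughRootsOfUnity]
  · obtain ⟨χ, hχ⟩ := exists_apply_ne_one_of_hasEnoughRootsOfUnity F ℂ hv
    refine eq_zero_of_mul_eq_self_left hχ ?_
    simp only [mul_sum, ← mul_apply]
    exact Fintype.sum_bijective _ (Group.mulLeft_bijective χ) _ _ fun _ ↦ rfl

lemma sum_filter_pow_eq {n : ℕ} (hn : n ≠ 0) (χ : MulChar F ℂ) (u : F) :
    ∑ x with x ^ n = u, χ x = ∑ φ : MulChar F ℂ with φ ^ n = χ⁻¹, φ u⁻¹ := by
  rcases eq_or_ne u 0 with rfl | hu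
  · simp [pow_eq_zero_iff hn, filter_eq']
  have hq : (Fintype.card Fˣ : ℂ) ≠ 0 := Nat.cast_ne_zero.mpr Fintype.card_ne_zero
  refine mul_left_cancel₀ hq ?_
  calc (Fintype.card Fˣ : ℂ) * ∑ x with x ^ n = u, χ x
      = ∑ x, χ x * ∑ φ : MulChar F ℂ, φ (x ^ n * u⁻¹) := by
        rw [sum_filter, mul_sum]
        refine sum_congr rfl fun x _ ↦ ?_
        simp only [sum_mulChar_apply_eq_ite, mul_inv_eq_one₀ hu]
        split_ifs <;> ring
    _ = ∑ φ : MulChar F ℂ, φ u⁻¹ * ∑ x, (φ ^ n * χ) x := by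
        simp only [mul_sum]
        rw [sum_comm]
        refine sum_congr rfl fun φ _ ↦ sum_congr rfl fun x _ ↦ ?_
        rw [map_mul, mul_apply, pow_apply' φ hn, map_pow]
        ring
    _ = (Fintype.card Fˣ : ℂ) * ∑ φ : MulChar F ℂ with φ ^ n = χ⁻¹, φ u⁻¹ := by
        rw [sum_filter, mul_sum]
        refine sum_congr rfl fun φ _ ↦ ?_
        simp only [sum_apply_eq_ite, mul_eq_one_iff_eq_inv]
        split_ifs <;> ring

lemma sum_comp_pow_mul_eq {n : ℕ} (hn : n ≠ 0) (f : F → ℂ) (ψ : MulChar F ℂ) :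
    ∑ x, f (x ^ n) * ψ x = ∑ φ : MulChar F ℂ with φ ^ n = ψ⁻¹, ∑ u, f u * φ u⁻¹ := by
  calc ∑ x, f (x ^ n) * ψ x = ∑ u, f u * ∑ x with x ^ n = u, ψ x := by
        rw [← sum_fiberwise univ (· ^ n)]
        refine sum_congr rfl fun u _ ↦ ?_
        rw [mul_sum]
        exact sum_congr rfl fun x hx ↦ by rw [(mem_filter.mp hx).2]
    _ = _ := by simp only [sum_filter_pow_eq hn, mul_sum]; exact sum_comm

lemma norm_sum_apply_affine_pow_mul_le {n : ℕ} (hn : n ≠ 0) {a c : F} (ha : a ≠ 0) (hc : c ≠ 0)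
    {χ : MulChar F ℂ} (hχ : χ ≠ 1) (ψ : MulChar F ℂ) :
    ‖∑ x, χ (a * x ^ n + c) * ψ x‖ ≤ n * √(Fintype.card F) := by
  rw [sum_comp_pow_mul_eq hn (fun u ↦ χ (a * u + c))]
  calc _ ≤ ∑ φ : MulChar F ℂ with φ ^ n = ψ⁻¹, ‖∑ u, χ (a * u + c) * φ u⁻¹‖ := norm_sum_le _ _
    _ ≤ #{φ : MulChar F ℂ | φ ^ n = ψ⁻¹} • √(Fintype.card F) := by
        refine sum_le_card_nsmul _ _ _ fun φ _ ↦ ?_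
        simpa only [← inv_apply'] using norm_sum_apply_affine_mul_le ha hc hχ φ⁻¹
    _ ≤ n * √(Fintype.card F) := by
        rw [nsmul_eq_mul]
        gcongr
        exact_mod_cast IsCyclic.card_pow_eq_le (Nat.pos_of_ne_zero hn) ψ⁻¹

lemma sum_pow_eq_one_apply_eq_zero {n : ℕ} (hn : n ≠ 0) {w : F} (hw : ∀ y, y ^ n * w ≠ 1) :
    ∑ ψ : MulChar F ℂ with ψ ^ n = 1, ψ w = 0 := by
  rcases eq_or_ne w 0 with rfl | hw0
  · simp
  have := sum_filter_pow_eq hn 1 w⁻¹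
  rw [inv_one, inv_inv] at this
  rw [← this]
  refine sum_eq_zero fun y hy ↦ absurd ?_ (hw y)
  rw [(mem_filter.mp hy).2, inv_mul_cancel₀ hw0]

end MulChar

lemma sub_one_mul_mul_sqrt_lt {n q : ℕ} (hn : n ≠ 0) (hq : (n ^ 2 - n + 1) ^ 2 < q) :
    ((n : ℝ) - 1) * (n * √q) < q - 1 := by
  have hn1 : (1 : ℝ) ≤ n := by exact_mod_cast Nat.one_le_iff_ne_zero.mpr hn
  have hcast : ((n ^ 2 - n + 1 : ℕ) : ℝ) = (n : ℝ) ^ 2 - n + 1 := by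
    push_cast [Nat.cast_sub (Nat.le_self_pow two_ne_zero n)]
    ring
  have hs : (n : ℝ) ^ 2 - n + 1 < √q := by
    rw [← hcast, Real.lt_sqrt (Nat.cast_nonneg _)]
    exact_mod_cast hq
  have hsq : √q ^ 2 = q := Real.sq_sqrt (Nat.cast_nonneg _)
  nlinarith [mul_pos (by nlinarith : (0 : ℝ) < √q) (sub_pos.mpr hs)]

section Equation

variable {F : Type*} [Field F] [Fintype F] [DecidableEq F] {n : ℕ} {a c : F}

/-- Without solutions `(a * x ^ n + c) / x` is never an `n`-th power, so for each `x` the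
characters of order dividing `n` sum to `0` at it. -/
lemma card_units_eq_neg_sum_of_forall_ne_zero (hn : n ≠ 0)
    (hno : ∀ x y : F, a * x ^ n - x * y ^ n + c ≠ 0) :
    (Fintype.card Fˣ : ℂ) = -∑ ψ ∈ ({ψ : MulChar F ℂ | ψ ^ n = 1} : Finset _).erase 1,
      ∑ x, ψ⁻¹ (a * x ^ n + c) * ψ x := by
  have hne : ∀ x ≠ 0, a * x ^ n + c ≠ 0 := fun x _ h ↦ hno x 0 (by simp [zero_pow hn, h])
  have hsum : ∑ ψ : MulChar F ℂ with ψ ^ n = 1, ∑ x, ψ⁻¹ (a * x ^ n + c) * ψ x = 0 := by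
    rw [sum_comm]
    refine sum_eq_zero fun x _ ↦ ?_
    rw [← MulChar.sum_pow_eq_one_apply_eq_zero hn (w := x * (a * x ^ n + c)⁻¹) ?_]
    · exact sum_congr rfl fun ψ _ ↦ by rw [map_mul, MulChar.inv_apply', mul_comm]
    · intro y hy
      have hx : x ≠ 0 := by rintro rfl; simp at hy
      refine hno x y ?_
      field_simp [hne x hx] at hy
      linear_combination -hy
  have htrivial : ∑ x, (1 : MulChar F ℂ)⁻¹ (a * x ^ n + c) * (1 : MulChar F ℂ) x
      = Fintype.card Fˣ := by
    rw [← MulChar.sum_one_eq_card_units]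
    refine sum_congr rfl fun x _ ↦ ?_
    rcases eq_or_ne x 0 with rfl | hx
    · simp only [MulChar.map_zero, mul_zero]
    · rw [inv_one, MulChar.one_apply (hne x hx).isUnit, one_mul]
  rw [← add_sum_erase _ _ (a := 1) (by simp), htrivial] at hsum
  linear_combination hsum

lemma norm_sum_erase_one_le (hn : n ≠ 0) (ha : a ≠ 0) (hc : c ≠ 0) :
    ‖∑ ψ ∈ ({ψ : MulChar F ℂ | ψ ^ n = 1} : Finset _).erase 1,
      ∑ x, ψ⁻¹ (a * x ^ n + c) * ψ x‖ ≤ ((n : ℝ) - 1) * (n * √(Fintype.card F)) := by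
  have hcard : #(({ψ : MulChar F ℂ | ψ ^ n = 1} : Finset _).erase 1) ≤ n - 1 := by
    rw [card_erase_of_mem (by simp)]
    exact Nat.sub_le_sub_right (IsCyclic.card_pow_eq_le (Nat.pos_of_ne_zero hn) 1) 1
  calc _ ≤ _ := norm_sum_le _ _
    _ ≤ #(({ψ : MulChar F ℂ | ψ ^ n = 1} : Finset _).erase 1) • (n * √(Fintype.card F)) :=
        sum_le_card_nsmul _ _ _ fun ψ hψ ↦ MulChar.norm_sum_apply_affine_pow_mul_le hn ha hc
          (inv_ne_one.mpr (ne_of_mem_erase hψ)) ψ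
    _ ≤ _ := by
        rw [nsmul_eq_mul, ← Nat.cast_pred (Nat.pos_of_ne_zero hn)]
        gcongr

end Equation

theorem exists_mul_pow_sub_mul_pow_add_eq_zero {F : Type*} [Field F] [Fintype F] {n : ℕ}
    (hn : n ≠ 0) (hq : (n ^ 2 - n + 1) ^ 2 < Fintype.card F) {a c : F} (ha : a ≠ 0) (hc : c ≠ 0) :
    ∃ x y : F, a * x ^ n - x * y ^ n + c = 0 := by
  classical
  by_contra! hno
  have hunits : (Fintype.card Fˣ : ℝ) = Fintype.card F - 1 := by
    rw [Fintype.card_units, Nat.cast_pred Fintype.card_pos]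
  have := congrArg norm (card_units_eq_neg_sum_of_forall_ne_zero hn hno)
  rw [norm_neg, Complex.norm_natCast, hunits] at this
  linarith [norm_sum_erase_one_le hn ha hc, sub_one_mul_mul_sqrt_lt hn hq]

theorem exists_solution_of_large_q_general {p e n : ℕ}
    (F : Type*) [Field F] [Fintype F] (hF : Fintype.card F = p ^ e)
    (hn1 : 1 ≤ n) (hq : (n ^ 2 - n + 1) ^ 2 < p ^ e) :
    ∀ a c : F, a ≠ 0 → c ≠ 0 → ∃ x y : F, a * x ^ n - x * y ^ n + c = 0 :=
  fun _ _ ha hc ↦ exists_mul_pow_sub_mul_pow_add_eq_zero (by omega) (hF ▸ hq) ha hc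

theorem exists_solution_of_large_q {p e n : ℕ} (hp : p.Prime) (he : 0 < e)
    (F : Type*) [Field F] [Fintype F] (hF : Fintype.card F = p ^ e)
    (hn1 : 1 ≤ n) (hn : n ≤ p ^ e - 1)
    (hpn : ¬ p ∣ n) (hq : (n ^ 2 - n + 1) ^ 2 < p ^ e) :
    ∀ a c : F, a ≠ 0 → c ≠ 0 → ∃ x y : F, a * x ^ n - x * y ^ n + c = 0 :=
  exists_solution_of_large_q_general F hF hn1 hq
end

section
/- Let p be a prime and 1 ≤ m ≤ n ≤ p−1. Then the monomial digraph D(p; m, n) is strong and diam(D(p; m, n)) ≤ 2p − 1. -/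
/-!
From `(a, b)` one arc reaches a vertex with prescribed first coordinate, and short walks then
shift the second coordinate by a fixed `γ ≠ 0` while keeping the first one under control
(`g ≠ 0` is any element with `g ^ (n - m) ≠ 1`, which exists as `0 < n - m < p - 1`):
* `m < n`: the 2-cycle `(1, c) → (g, g ^ n - c) → (1, c + γ)` with `γ = g ^ m - g ^ n`;
* `m = n < p - 1`: `(x, c) → (1 / x, 1 - c) → (x * g, c + γ)` with `γ = g ^ m - 1`, and the same
  with `g` and `1` exchanged for `-γ`;
* `m = n = p - 1`: here `x ^ m` only records whether `x = 0`, and a walk of length 4 through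
  `(0, _)` and `(1, _)` shifts by `γ = 1`; reversing it (the digraph is symmetric) shifts by `-1`.

For `m < n` the arc `(1, c) → (1, 1 - c)`, inserted before or after the shifts, supplies `-γ`.
As `F` has prime order `p`, every element is `±j • γ` with `j ≤ p / 2`, so every target is
reached within `2 (p / 2) + 3` (resp. `4 (p / 2) + 1`) steps, which is at most `2 p - 1`.
For `p = 2` we have `m = n = 1`, and any two vertices are joined by a walk of length 3.
-/

section Walks

variable {V : Type*} {r : V → V → Prop}

theorem walkLen_one {x y : V} (h : r x y) : walkLen r 1 x y := ⟨y, h, rfl⟩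

theorem walkLen_add {k l : ℕ} {x y z : V} (hxy : walkLen r k x y) (hyz : walkLen r l y z) :
    walkLen r (k + l) x z := by
  induction k generalizing x with
  | zero =>
    obtain rfl : x = y := hxy
    simpa using hyz
  | succ k ih =>
    obtain ⟨w, hxw, hwy⟩ := hxy
    rw [Nat.add_right_comm]
    exact ⟨w, hxw, ih hwy⟩

theorem walkLen_symm [Std.Symm r] {k : ℕ} {x y : V} (h : walkLen r k x y) : walkLen r k y x := by
  induction k generalizing x with
  | zero => exact (h : x = y).symm
  | succ k ih =>
    obtain ⟨z, hxz, hzy⟩ := h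
    exact walkLen_add (ih hzy) (walkLen_one (Std.Symm.symm _ _ hxz))

theorem exists_walkLen_mul_of_step {A : Type*} [AddMonoid A] (P : A → V → Prop) {k : ℕ} {δ : A}
    (step : ∀ c x, P c x → ∃ y, P (c + δ) y ∧ walkLen r k x y) (j : ℕ) {c : A} {x : V}
    (hx : P c x) : ∃ y, P (c + j • δ) y ∧ walkLen r (k * j) x y := by
  induction j generalizing c x with
  | zero => exact ⟨x, by simpa using hx, rfl⟩
  | succ j ih =>
    obtain ⟨y, hy, hxy⟩ := step c x hx
    obtain ⟨z, hz, hyz⟩ := ih hy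
    refine ⟨z, by rwa [succ_nsmul', ← add_assoc], ?_⟩
    rw [Nat.mul_succ, Nat.add_comm]
    exact walkLen_add hxy hyz

theorem walkLen_mul_of_step {A : Type*} [AddMonoid A] (f : A → V) {k : ℕ} {δ : A}
    (step : ∀ c, walkLen r k (f c) (f (c + δ))) (j : ℕ) (c : A) :
    walkLen r (k * j) (f c) (f (c + j • δ)) := by
  obtain ⟨_, rfl, h⟩ :=
    exists_walkLen_mul_of_step (fun c x => x = f c) (fun c _ hx => ⟨_, rfl, hx ▸ step c⟩) j rfl
  exact h

theorem isStrongDigraph_and_ddiam_le {N : ℕ} (h : ∀ x y : V, ∃ k ≤ N, walkLen r k x y) :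
    IsStrongDigraph r ∧ ddiam r ≤ N := by
  refine ⟨fun x y => (h x y).imp fun _ => And.right, iSup₂_le fun x y => ?_⟩
  obtain ⟨k, hk, hxy⟩ := h x y
  exact (iInf₂_le k hxy).trans (by exact_mod_cast hk)

end Walks

theorem exists_le_half_eq_nsmul_or_eq_neg_nsmul {G : Type*} [AddGroup G] {p : ℕ} (hp : p.Prime)
    (hG : Nat.card G = p) {δ : G} (hδ : δ ≠ 0) (x : G) :
    ∃ j ≤ p / 2, x = j • δ ∨ x = -(j • δ) := by
  have := Fact.mk hp
  obtain ⟨n, rfl⟩ :=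
    (AddSubmonoid.mem_multiples_iff _ _).1 (mem_multiples_of_prime_card hG hδ (g' := x))
  rw [← mod_natCard_nsmul, hG]
  have hj : n % p < p := Nat.mod_lt _ hp.pos
  by_cases h : n % p ≤ p / 2
  · exact ⟨n % p, h, .inl rfl⟩
  · refine ⟨p - n % p, by omega, .inr ?_⟩
    rw [eq_neg_iff_add_eq_zero, ← add_nsmul, Nat.add_sub_cancel' hj.le, ← hG, card_nsmul_eq_zero']

theorem FiniteField.exists_ne_zero_pow_ne_one {F : Type*} [Field F] [Fintype F] {k : ℕ}
    (hk : k ≠ 0) (hkF : k < Fintype.card F - 1) : ∃ g : F, g ≠ 0 ∧ g ^ k ≠ 1 := by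
  classical
  obtain ⟨g, hg⟩ := exists_pow_ne_one_of_isCyclic (G := Fˣ) hk
    (by rwa [Nat.card_eq_fintype_card, Fintype.card_units])
  exact ⟨g, g.ne_zero, fun h => hg (Units.ext (by simpa using h))⟩

namespace monomialArc

variable {F : Type*} [Field F] {m n : ℕ}

instance (m : ℕ) : Std.Symm (monomialArc (F := F) m m) where
  symm x y h := by
    simp only [monomialArc] at *
    rw [add_comm, mul_comm, h]

theorem one_left (c y : F) : monomialArc m n (1, c) (y, y ^ n - c) := by
  simp [monomialArc]

theorem one_right (x c : F) : monomialArc m n (x, c) (1, x ^ m - c) := by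
  simp [monomialArc]

theorem one_one_sub (c : F) : monomialArc m n (1, c) (1, 1 - c) := by
  simp [monomialArc]

theorem walkLen_two_of_snd_eq (hm : m ≠ 0) (hn : n ≠ 0) (x y c : F) :
    walkLen (monomialArc m n) 2 (x, c) (y, c) :=
  ⟨(0, -c), by simp [monomialArc, zero_pow hn], (y, c), by simp [monomialArc, zero_pow hm], rfl⟩

theorem walkLen_three_one_one (a b u v : F) : walkLen (monomialArc 1 1) 3 (a, b) (u, v) :=
  ⟨(u + 1, a * (u + 1) - b), by simp [monomialArc],
    (a * (u + 1) - b - v, u * (a * (u + 1) - b - v) - v), by simp [monomialArc]; ring,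
    (u, v), by simp [monomialArc]; ring, rfl⟩

theorem walkLen_two_one_add_pow_sub_pow (y c : F) :
    walkLen (monomialArc m n) 2 (1, c) (1, c + (y ^ m - y ^ n)) :=
  ⟨_, one_left c y, _, by simp [monomialArc]; ring, rfl⟩

theorem walkLen_two_mul_div {x t : F} (hx : x ≠ 0) (ht : t ≠ 0) (s c : F) :
    walkLen (monomialArc m m) 2 (x, c) (x * s / t, c + (s ^ m - t ^ m)) :=
  ⟨(t / x, t ^ m - c), by simp [monomialArc, ← mul_pow, mul_div_cancel₀ _ hx],
    _, by simp only [monomialArc, ← mul_pow]; field_simp; ring, rfl⟩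

theorem walkLen_four_add_one (hm : m ≠ 0) (hpow : ∀ x : F, x ≠ 0 → x ^ m = 1) (x c : F) :
    walkLen (monomialArc m m) 4 (x, c) (x, c + 1) := by
  rcases eq_or_ne x 0 with rfl | hx
  · exact ⟨(1, -c), by simp [monomialArc, zero_pow hm], (1, c + 1), by simp [monomialArc],
      (0, -c - 1), by simp [monomialArc, zero_pow hm], (0, c + 1),
      by simp [monomialArc, zero_pow hm], rfl⟩
  · exact ⟨(0, -c), by simp [monomialArc, zero_pow hm], (0, c), by simp [monomialArc, zero_pow hm],
      (1, -c), by simp [monomialArc, zero_pow hm], (x, c + 1), by simp [monomialArc, hpow x hx], rfl⟩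

theorem walkLen_four_sub_one (hm : m ≠ 0) (hpow : ∀ x : F, x ≠ 0 → x ^ m = 1) (x c : F) :
    walkLen (monomialArc m m) 4 (x, c) (x, c - 1) :=
  walkLen_symm (by simpa using walkLen_four_add_one hm hpow x (c - 1))

variable {p : ℕ} [Fintype F]

theorem exists_walkLen_le_of_lt (hp : p.Prime) (hF : Fintype.card F = p) (hm : m ≠ 0)
    (hmn : m < n) (hn : n < p) (a b u v : F) :
    ∃ k ≤ 2 * p - 1, walkLen (monomialArc m n) k (a, b) (u, v) := by
  obtain ⟨g, hg0, hg⟩ := FiniteField.exists_ne_zero_pow_ne_one (F := F) (k := n - m)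
    (by omega) (by omega)
  have hγ : g ^ m - g ^ n ≠ 0 := by
    rw [show n = m + (n - m) by omega, pow_add, ← mul_one_sub]
    exact mul_ne_zero (pow_ne_zero _ hg0) (sub_ne_zero.2 (Ne.symm hg))
  set γ := g ^ m - g ^ n
  have chain : ∀ j c, walkLen (monomialArc m n) (2 * j) ((1 : F), c) (1, c + j • γ) :=
    walkLen_mul_of_step (fun c => (1, c)) (walkLen_two_one_add_pow_sub_pow g)
  set T := u ^ n - 1 + a ^ m - b
  obtain ⟨j, hj, hv | hv⟩ := exists_le_half_eq_nsmul_or_eq_neg_nsmul hp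
    (by rw [Nat.card_eq_fintype_card, hF]) hγ (v - T)
  · refine ⟨1 + (2 * j + (1 + 1)), by omega, ?_⟩
    convert walkLen_add (walkLen_one (one_right a b))
      (walkLen_add (chain j _) (walkLen_add (walkLen_one (one_one_sub _))
        (walkLen_one (one_left _ u)))) using 3
    linear_combination hv
  · refine ⟨1 + (1 + (2 * j + 1)), by omega, ?_⟩
    convert walkLen_add (walkLen_one (one_right a b))
      (walkLen_add (walkLen_one (one_one_sub _))
        (walkLen_add (chain j _) (walkLen_one (one_left _ u)))) using 3
    linear_combination hv

theorem exists_walkLen_le_of_lt_card_sub_one (hp : p.Prime) (hF : Fintype.card F = p)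
    (hm : m ≠ 0) (hmp : m < p - 1) (a b u v : F) :
    ∃ k ≤ 2 * p - 1, walkLen (monomialArc m m) k (a, b) (u, v) := by
  obtain ⟨g, hg0, hg⟩ := FiniteField.exists_ne_zero_pow_ne_one hm (hF ▸ hmp)
  set γ := g ^ m - 1
  let P : F → F × F → Prop := fun c x => x.1 ≠ 0 ∧ x.2 = c
  have up : ∀ c x, P c x → ∃ y, P (c + γ) y ∧ walkLen (monomialArc m m) 2 x y := by
    rintro _ ⟨x, c⟩ ⟨hx, rfl⟩
    exact ⟨(x * g, c + γ), ⟨mul_ne_zero hx hg0, rfl⟩,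
      by simpa [γ] using walkLen_two_mul_div hx one_ne_zero g c⟩
  have down : ∀ c x, P c x → ∃ y, P (c + -γ) y ∧ walkLen (monomialArc m m) 2 x y := by
    rintro _ ⟨x, c⟩ ⟨hx, rfl⟩
    exact ⟨(x / g, c + -γ), ⟨div_ne_zero hx hg0, rfl⟩,
      by simpa [γ] using walkLen_two_mul_div hx hg0 1 c⟩
  have start : P (a ^ m - b) (1, a ^ m - b) := ⟨one_ne_zero, rfl⟩
  obtain ⟨j, hj, hv | hv⟩ := exists_le_half_eq_nsmul_or_eq_neg_nsmul hp
    (by rw [Nat.card_eq_fintype_card, hF]) (sub_ne_zero.2 hg) (v - (a ^ m - b))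
  · obtain ⟨⟨y, _⟩, ⟨-, rfl⟩, hwalk⟩ := exists_walkLen_mul_of_step P up j start
    refine ⟨1 + (2 * j + 2), by omega, ?_⟩
    convert walkLen_add (walkLen_one (one_right a b))
      (walkLen_add hwalk (walkLen_two_of_snd_eq hm hm y u _)) using 3
    linear_combination hv
  · obtain ⟨⟨y, _⟩, ⟨-, rfl⟩, hwalk⟩ := exists_walkLen_mul_of_step P down j start
    refine ⟨1 + (2 * j + 2), by omega, ?_⟩
    convert walkLen_add (walkLen_one (one_right a b))
      (walkLen_add hwalk (walkLen_two_of_snd_eq hm hm y u _)) using 3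
    linear_combination hv

theorem exists_walkLen_le_of_card_sub_one (hp : p.Prime) (hp2 : p ≠ 2)
    (hF : Fintype.card F = p) (a b u v : F) :
    ∃ k ≤ 2 * p - 1, walkLen (monomialArc (p - 1) (p - 1)) k (a, b) (u, v) := by
  have hp1 : p - 1 ≠ 0 := by have := hp.two_le; omega
  have hpow (x : F) (hx : x ≠ 0) : x ^ (p - 1) = 1 := hF ▸ FiniteField.pow_card_sub_one_eq_one x hx
  have hodd : p % 2 = 1 := Nat.odd_iff.mp (hp.odd_of_ne_two hp2)
  set T := a ^ (p - 1) * u ^ (p - 1) - b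
  have start : monomialArc (p - 1) (p - 1) (a, b) (u, T) := by simp [monomialArc, T]
  obtain ⟨j, hj, hv | hv⟩ := exists_le_half_eq_nsmul_or_eq_neg_nsmul hp
    (by rw [Nat.card_eq_fintype_card, hF]) one_ne_zero (v - T)
  · refine ⟨1 + 4 * j, by omega, ?_⟩
    convert walkLen_add (walkLen_one start)
      (walkLen_mul_of_step (fun c => (u, c)) (walkLen_four_add_one hp1 hpow u) j T) using 3
    linear_combination hv
  · refine ⟨1 + 4 * j, by omega, ?_⟩
    convert walkLen_add (walkLen_one start) (walkLen_mul_of_step (fun c => (u, c)) (δ := -1)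
      (by simpa [← sub_eq_add_neg] using walkLen_four_sub_one hp1 hpow u) j T) using 3
    linear_combination hv

end monomialArc

theorem strong_and_diam_le_two_p_sub_one {p m n : ℕ} (hp : p.Prime)
    (F : Type*) [Field F] [Fintype F] (hF : Fintype.card F = p)
    (hm : 1 ≤ m) (hmn : m ≤ n) (hn : n ≤ p - 1) :
    IsStrongDigraph (monomialArc (F := F) m n) ∧
      ddiam (monomialArc (F := F) m n) ≤ ((2 * p - 1 : ℕ) : ℕ∞) := by
  refine isStrongDigraph_and_ddiam_le fun ⟨a, b⟩ ⟨u, v⟩ => ?_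
  have hm0 : m ≠ 0 := by omega
  rcases eq_or_ne p 2 with rfl | hp2
  · obtain rfl : m = 1 := by omega
    obtain rfl : n = 1 := by omega
    exact ⟨3, by norm_num, monomialArc.walkLen_three_one_one a b u v⟩
  rcases hmn.lt_or_eq with hlt | rfl
  · exact monomialArc.exists_walkLen_le_of_lt hp hF hm0 hlt (by omega) a b u v
  rcases hn.lt_or_eq with hlt | rfl
  · exact monomialArc.exists_walkLen_le_of_lt_card_sub_one hp hF hm0 hlt a b u v
  · exact monomialArc.exists_walkLen_le_of_card_sub_one hp hp2 hF a b u v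
end
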